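/- Fix T ≥ 1, nonempty finite patch sets I_1,…,I_T, a nonempty finite set A of types, and a stochastic choice function ρ = (ρ_{i|t}). Then the following are equivalent: (i) there exists ν that rationalizes ρ over A; (ii) for every family r of real numbers r(t,i) ∈ [0,1] (for t ∈ {1,…,T}, i ∈ I_t) and every real c ≥ 0 such that Σ_{t=1}^T r(t, a(t)) ≤ c for all a ∈ A, one has Σ_{t=1}^T Σ_{i∈I_t} r(t,i)·ρ_{i|t} ≤ c. -/

import Mathlib

/-!
`ρ` is rationalizable over `A` exactly when it lies in the convex hull of the indicator vectors
of the types in `A`. That hull is compact, so by Hahn–Banach `ρ` lies in it iff every linear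
functional `∑ t, ∑ i, r t i * y t i` bounded by `c` on the indicators is bounded by `c` at `ρ`.
Since every block of `ρ` and of an indicator sums to one, shifting each block of `r` by a
constant and rescaling reduces this to `r` with values in `[0, 1]` and `c ≥ 0`.
-/

open scoped BigOperators Classical

noncomputable section

/-- `ρ` is a stochastic choice function on the patch sets `I t`. -/
def StochasticChoice {T : ℕ} {I : Fin T → Type*} [∀ t, Fintype (I t)]
    (ρ : ∀ t, I t → ℝ) : Prop :=
  (∀ t i, 0 ≤ ρ t i) ∧ ∀ t, ∑ i, ρ t i = 1

/-- `ν` rationalizes the stochastic choice function `ρ` over the finite set `A`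
of types: `ν` is nonnegative on `A`, sums to one over `A`, and for every period
`t` and patch `i ∈ I t`, the total mass of types choosing `i` at `t` equals
`ρ_{i|t}`. -/
def Rationalizes {T : ℕ} {I : Fin T → Type*} [∀ t, Fintype (I t)]
    (A : Finset (∀ t, I t)) (ρ : ∀ t, I t → ℝ) (ν : (∀ t, I t) → ℝ) : Prop :=
  (∀ a ∈ A, 0 ≤ ν a) ∧ (∑ a ∈ A, ν a = 1) ∧
  ∀ (t : Fin T) (i : I t), (∑ a ∈ A.filter fun a => a t = i, ν a) = ρ t i

open Finset

theorem mem_convexHull_iff_forall_le_of_finite {E : Type*} [AddCommGroup E] [Module ℝ E]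
    [TopologicalSpace E] [IsTopologicalAddGroup E] [ContinuousSMul ℝ E] [LocallyConvexSpace ℝ E]
    [T2Space E] {s : Set E} (hs : s.Finite) {x : E} :
    x ∈ convexHull ℝ s ↔ ∀ (f : E →ₗ[ℝ] ℝ) (c : ℝ), (∀ y ∈ s, f y ≤ c) → f x ≤ c := by
  refine ⟨fun hx f c hfc => convexHull_min hfc (convex_halfSpace_le (𝕜 := ℝ) f.isLinear c) hx,
    fun h => ?_⟩
  by_contra hx
  obtain ⟨f, u, hfs, hfx⟩ := geometric_hahn_banach_closed_point (convex_convexHull ℝ s)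
    (hs.isClosed_convexHull ℝ) hx
  exact hfx.not_ge <| h f u fun y hy => (hfs y (subset_convexHull ℝ s hy)).le

namespace StochasticChoice

variable {T : ℕ} {I : Fin T → Type*}

def typeIndicator (a : ∀ t, I t) : ∀ t, I t → ℝ := fun t i => if a t = i then 1 else 0

theorem typeIndicator_injective : Function.Injective (typeIndicator (I := I)) := by
  intro a b hab
  funext t
  simpa [typeIndicator, eq_comm] using congrFun (congrFun hab t) (a t)

theorem sum_smul_typeIndicator_apply (A : Finset (∀ t, I t)) (ν : (∀ t, I t) → ℝ) (t : Fin T)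
    (i : I t) : (∑ a ∈ A, ν a • typeIndicator a) t i = ∑ a ∈ A with a t = i, ν a := by
  simp [typeIndicator, Finset.sum_apply, sum_filter]

variable [∀ t, Fintype (I t)]

def pairing (r : ∀ t, I t → ℝ) : (∀ t, I t → ℝ) →ₗ[ℝ] ℝ where
  toFun y := ∑ t, ∑ i, r t i * y t i
  map_add' y z := by simp only [Pi.add_apply, mul_add, sum_add_distrib]
  map_smul' k y := by
    simp only [Pi.smul_apply, smul_eq_mul, mul_sum, RingHom.id_apply, mul_left_comm]

theorem pairing_apply (r y : ∀ t, I t → ℝ) : pairing r y = ∑ t, ∑ i, r t i * y t i := rfl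

theorem pairing_typeIndicator (r : ∀ t, I t → ℝ) (a : ∀ t, I t) :
    pairing r (typeIndicator a) = ∑ t, r t (a t) := by
  simp [pairing_apply, typeIndicator]

theorem eq_pairing_of_linearMap (f : (∀ t, I t → ℝ) →ₗ[ℝ] ℝ) :
    f = pairing fun t i => f (Pi.single t (Pi.single i 1)) := by
  refine LinearMap.ext fun y => ?_
  conv_lhs => rw [← univ_sum_single y]
  refine (map_sum f _ _).trans (sum_congr rfl fun t _ => ?_)
  rw [← LinearMap.single_apply ℝ, ← LinearMap.comp_apply,
    LinearMap.pi_apply_eq_sum_univ]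
  refine sum_congr rfl fun i _ => ?_
  rw [smul_eq_mul, mul_comm]
  have hsingle : (fun j => if i = j then 1 else 0) = (Pi.single i 1 : I t → ℝ) :=
    funext fun j => by simp [Pi.single_apply, eq_comm]
  simp [hsingle]

theorem rationalizes_iff_sum_smul_typeIndicator {A : Finset (∀ t, I t)} {ρ : ∀ t, I t → ℝ}
    {ν : (∀ t, I t) → ℝ} :
    Rationalizes A ρ ν ↔
      (∀ a ∈ A, 0 ≤ ν a) ∧ ∑ a ∈ A, ν a = 1 ∧ ∑ a ∈ A, ν a • typeIndicator a = ρ := by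
  simp only [Rationalizes, funext_iff, sum_smul_typeIndicator_apply]

theorem exists_rationalizes_iff_mem_convexHull (A : Finset (∀ t, I t)) (ρ : ∀ t, I t → ℝ) :
    (∃ ν, Rationalizes A ρ ν) ↔ ρ ∈ convexHull ℝ (typeIndicator '' A) := by
  simp only [rationalizes_iff_sum_smul_typeIndicator]
  constructor
  · rintro ⟨ν, hν₀, hν₁, rfl⟩
    rw [← centerMass_eq_of_sum_1 _ _ hν₁]
    exact A.centerMass_mem_convexHull hν₀ (by simp [hν₁]) fun a ha => ⟨a, ha, rfl⟩
  · rw [← coe_image, Finset.mem_convexHull']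
    rintro ⟨w, hw₀, hw₁, hwρ⟩
    have hinj : Set.InjOn typeIndicator (A : Set (∀ t, I t)) := typeIndicator_injective.injOn
    refine ⟨w ∘ typeIndicator, fun a ha => hw₀ _ (mem_image_of_mem _ ha), ?_, ?_⟩
    · rwa [sum_image hinj] at hw₁
    · rwa [sum_image hinj] at hwρ

theorem mem_convexHull_typeIndicator_iff (A : Finset (∀ t, I t)) (y : ∀ t, I t → ℝ) :
    y ∈ convexHull ℝ (typeIndicator '' A) ↔
      ∀ (r : ∀ t, I t → ℝ) (c : ℝ), (∀ a ∈ A, ∑ t, r t (a t) ≤ c) →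
        ∑ t, ∑ i, r t i * y t i ≤ c := by
  rw [mem_convexHull_iff_forall_le_of_finite ((A.finite_toSet).image _)]
  simp only [Set.forall_mem_image, ← pairing_typeIndicator]
  refine ⟨fun h r c hrc => h (pairing r) c hrc, fun h f c hfc => ?_⟩
  rw [eq_pairing_of_linearMap f] at hfc ⊢
  exact h _ c hfc

theorem sum_sum_affine_mul {ρ : ∀ t, I t → ℝ} (hρ : ∀ t, ∑ i, ρ t i = 1)
    (r : ∀ t, I t → ℝ) (α β : ℝ) :
    ∑ t, ∑ i, (α * r t i + β) * ρ t i = α * ∑ t, ∑ i, r t i * ρ t i + T * β := by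
  simp only [add_mul, sum_add_distrib, ← mul_sum, hρ, mul_assoc, mul_one, sum_const, card_univ,
    Fintype.card_fin, nsmul_eq_mul]

/- The dual inequalities are invariant under `r ↦ α • r + β`, `c ↦ α * c + T * β` for `α > 0`,
because every block of `ρ` and of a type indicator sums to one; this moves any `r` into `[0, 1]`. -/
theorem forall_sum_mul_le_of_forall_unitInterval {A : Finset (∀ t, I t)} (hA : A.Nonempty)
    {ρ : ∀ t, I t → ℝ} (hρ : ∀ t, ∑ i, ρ t i = 1)
    (h : ∀ (r : ∀ t, I t → ℝ) (c : ℝ), (∀ t i, r t i ∈ Set.Icc (0 : ℝ) 1) → 0 ≤ c →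
      (∀ a ∈ A, ∑ t, r t (a t) ≤ c) → ∑ t, ∑ i, r t i * ρ t i ≤ c)
    (r : ∀ t, I t → ℝ) (c : ℝ) (hrc : ∀ a ∈ A, ∑ t, r t (a t) ≤ c) :
    ∑ t, ∑ i, r t i * ρ t i ≤ c := by
  set K := ∑ t, ∑ i, |r t i|
  have hK : ∀ t i, |r t i| ≤ K := fun t i =>
    (single_le_sum (fun i _ => abs_nonneg (r t i)) (mem_univ i)).trans
      (single_le_sum (f := fun t => ∑ i, |r t i|) (fun t _ => sum_nonneg fun i _ => abs_nonneg _)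
        (mem_univ t))
  have hK₀ : 0 ≤ K := sum_nonneg fun t _ => sum_nonneg fun i _ => abs_nonneg _
  set α := (2 * K + 1)⁻¹
  have hα : 0 < α := by positivity
  set r' : ∀ t, I t → ℝ := fun t i => α * r t i + α * K
  have hr' : ∀ t i, r' t i ∈ Set.Icc (0 : ℝ) 1 := fun t i => by
    have hbound := abs_le.1 (hK t i)
    constructor
    · have : 0 ≤ r t i + K := by linarith
      simpa [r', ← mul_add] using mul_nonneg hα.le this
    · simp only [r', ← mul_add, α]
      rw [inv_mul_le_iff₀ (by positivity)]
      linarith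
  have hsum : ∀ a : ∀ t, I t, ∑ t, r' t (a t) = α * ∑ t, r t (a t) + T * (α * K) := by
    intro a; simp [r', sum_add_distrib, mul_sum]
  have hr'c : ∀ a ∈ A, ∑ t, r' t (a t) ≤ α * c + T * (α * K) := fun a ha => by
    rw [hsum]; gcongr; exact hrc a ha
  obtain ⟨a₀, ha₀⟩ := hA
  have hc' : 0 ≤ α * c + T * (α * K) :=
    (sum_nonneg fun t _ => (hr' t (a₀ t)).1).trans (hr'c a₀ ha₀)
  have := h r' _ hr' hc' hr'c
  rw [sum_sum_affine_mul hρ] at this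
  exact le_of_mul_le_mul_left (by linarith) hα

end StochasticChoice

open StochasticChoice

theorem rationalizable_iff_dual_inequalities_general
    {T : ℕ} {I : Fin T → Type*}
    [∀ t, Fintype (I t)]
    (A : Finset (∀ t, I t)) (hA : A.Nonempty)
    (ρ : ∀ t, I t → ℝ) (hρ : StochasticChoice ρ) :
    (∃ ν : (∀ t, I t) → ℝ, Rationalizes A ρ ν) ↔
      ∀ (r : (t : Fin T) → I t → ℝ) (c : ℝ),
        (∀ t i, r t i ∈ Set.Icc (0 : ℝ) 1) → 0 ≤ c →
        (∀ a ∈ A, (∑ t, r t (a t)) ≤ c) →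
        (∑ t, ∑ i, r t i * ρ t i) ≤ c := by
  rw [exists_rationalizes_iff_mem_convexHull, mem_convexHull_typeIndicator_iff]
  exact ⟨fun h r c _ _ => h r c, forall_sum_mul_le_of_forall_unitInterval hA hρ.2⟩

/-- a stochastic choice function is rationalizable over the set
of types `A` if and only if for every `[0,1]`-valued family `r(t,i)` and every
`c ≥ 0` such that `Σ_t r(t, a(t)) ≤ c` for all types `a ∈ A`, one has
`Σ_t Σ_i r(t,i)·ρ_{i|t} ≤ c`. -/
theorem rationalizable_iff_dual_inequalities
    {T : ℕ} (hT : 1 ≤ T) {I : Fin T → Type*}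
    [∀ t, Fintype (I t)] [∀ t, Nonempty (I t)]
    (A : Finset (∀ t, I t)) (hA : A.Nonempty)
    (ρ : ∀ t, I t → ℝ) (hρ : StochasticChoice ρ) :
    (∃ ν : (∀ t, I t) → ℝ, Rationalizes A ρ ν) ↔
      ∀ (r : (t : Fin T) → I t → ℝ) (c : ℝ),
        (∀ t i, r t i ∈ Set.Icc (0 : ℝ) 1) → 0 ≤ c →
        (∀ a ∈ A, (∑ t, r t (a t)) ≤ c) →
        (∑ t, ∑ i, r t i * ρ t i) ≤ c :=
  rationalizable_iff_dual_inequalities_general A hA ρ hρ
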